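/- arXiv:1009.2929 — 2 statements merged into one kernel-verified Lean document; each statement's English description precedes it below -/
import Mathlib

section
/- For any integers n ≥ 0, m ≥ 1 and any prime p not dividing m, the polynomial congruence x^m · Σ_{k=1}^{p-1} (−m)^{p-1-k} B_{n+k}(x) ≡ x^p · Σ_{k=0}^{n} S(n,k) (−1)^{m+k-1} D_{m+k-1}(1−x) (mod p) holds coefficientwise. -/
open Polynomial Finset

/-- Stirling numbers of the second kind. -/
def stirling2 : ℕ → ℕ → ℕ
  | 0, 0 => 1
  | 0, _ + 1 => 0
  | _ + 1, 0 => 0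
  | n + 1, k + 1 => (k + 1) * stirling2 n (k + 1) + stirling2 n k

/-- Signed Stirling numbers of the first kind. -/
def stirling1 : ℕ → ℕ → ℤ
  | 0, 0 => 1
  | 0, _ + 1 => 0
  | n + 1, 0 => -(n : ℤ) * stirling1 n 0
  | n + 1, k + 1 => stirling1 n k - (n : ℤ) * stirling1 n (k + 1)

/-- The Bell polynomial `B_m(x) = ∑_{j=0}^m S(m,j) x^j` over `ℤ`. -/
noncomputable def bellPoly (m : ℕ) : Polynomial ℤ :=
  ∑ j ∈ range (m + 1), (stirling2 m j : ℤ) • X ^ j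

/-- The derangement polynomial `D_m(x) = ∑_{j=0}^m C(m,j) j! (x-1)^{m-j}` over `ℤ`. -/
noncomputable def derPoly (m : ℕ) : Polynomial ℤ :=
  ∑ j ∈ range (m + 1), ((m.choose j * j.factorial : ℕ) : ℤ) • (X - 1) ^ (m - j)

/-- The Bell numbers `B_m = ∑_j S(m,j)`. -/
def bell (m : ℕ) : ℕ := ∑ j ∈ range (m + 1), stirling2 m j

/-!
Work over `𝔽_p` with the linear map `φ : X ^ n ↦ B_n(X)` (`bellUmbra`). The recurrence
`B_{n+1} = X (B_n' + B_n)` shows that `φ` sends the falling factorial `(X)_k` to `X ^ k`, and,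
expanding in that basis, `φ (X f) = X φ (f (X + 1))`; hence `φ ((X)_k f) = X ^ k φ (f (X + k))`.

For `a ≠ 0`, the cofactor `G_a := (X ^ p - X) / (X + a)` (`fermatCofactor`) equals
`∑_{k=1}^{p-1} (-a)^{p-1-k} X ^ k`, so the left side is `X ^ m φ (X ^ n G_m)`. Writing
`X ^ n = ∑ S(n,k) (X)_k` and using `G_a (X + b) = G_{a+b}` reduces everything to
`X ^ {j+1} φ (G_{j+1}) = X ^ p (-1)^j D_j(1 - X)`. Since `X ^ p - X = (X)_p` in `𝔽_p[X]`,
applying `φ` to `(X + j) G_j = X ^ p - X` gives `X φ (G_{j+1}) = X ^ p - j φ (G_j)`, which is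
the derangement recurrence `D_{j+1} = (j + 1) D_j + (x - 1)^{j+1}` in disguise.
-/

theorem stirling2_eq_stirlingSecond : stirling2 = Nat.stirlingSecond := by
  funext n k
  induction n generalizing k with
  | zero => cases k <;> rfl
  | succ n ih =>
    cases k with
    | zero => rfl
    | succ k => rw [stirling2, Nat.stirlingSecond_succ_succ, ih, ih]

theorem coeff_bellPoly (n i : ℕ) : (bellPoly n).coeff i = Nat.stirlingSecond n i := by
  simp only [bellPoly, stirling2_eq_stirlingSecond, finsetSum_coeff, coeff_smul, coeff_X_pow,
    smul_eq_mul, mul_ite, mul_one, mul_zero, sum_ite_eq, mem_range]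
  split_ifs with h
  · rfl
  · rw [Nat.stirlingSecond_eq_zero_of_lt (by omega), Nat.cast_zero]

theorem bellPoly_succ (n : ℕ) :
    bellPoly (n + 1) = X * (derivative (bellPoly n) + bellPoly n) := by
  ext (_ | i)
  · simp [coeff_bellPoly]
  · rw [coeff_X_mul, coeff_add, coeff_derivative, coeff_bellPoly, coeff_bellPoly, coeff_bellPoly,
      Nat.stirlingSecond_succ_succ]
    push_cast
    ring

theorem derPoly_succ (j : ℕ) :
    derPoly (j + 1) = (j + 1 : ℤ[X]) * derPoly j + (X - 1) ^ (j + 1) := by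
  rw [derPoly, sum_range_succ', derPoly, mul_sum]
  congr 1
  · refine sum_congr rfl fun i _ => ?_
    rw [Nat.succ_sub_succ, Nat.factorial_succ, ← mul_assoc, mul_comm _ (i + 1),
      mul_comm (i + 1), ← Nat.add_one_mul_choose_eq]
    simp only [zsmul_eq_mul]
    push_cast
    ring
  · simp

section CommRing

variable {R : Type*} [CommRing R]

theorem X_mul_descPochhammer (k : ℕ) :
    X * descPochhammer R k = descPochhammer R (k + 1) + k • descPochhammer R k := by
  rw [descPochhammer_succ_right, nsmul_eq_mul]
  ring

theorem descPochhammer_succ_comp_X_add_one (k : ℕ) :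
    (descPochhammer R (k + 1)).comp (X + 1)
      = descPochhammer R (k + 1) + (k + 1) • descPochhammer R k := by
  conv_lhs => rw [descPochhammer_succ_left, mul_comp, X_comp, comp_assoc, sub_comp, X_comp,
    one_comp, add_sub_cancel_right, comp_X]
  rw [descPochhammer_succ_right, nsmul_eq_mul]
  push_cast
  ring

theorem X_pow_eq_sum_stirlingSecond_nsmul_descPochhammer (n : ℕ) :
    (X : R[X]) ^ n = ∑ k ∈ range (n + 1), Nat.stirlingSecond n k • descPochhammer R k := by
  induction n with
  | zero => simp
  | succ n ih =>
    have shift : ∑ k ∈ range (n + 1), (Nat.stirlingSecond n k * k) • descPochhammer R k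
        = ∑ k ∈ range (n + 1),
            ((k + 1) * Nat.stirlingSecond n (k + 1)) • descPochhammer R (k + 1) := by
      rw [sum_range_succ', sum_range_succ _ n, Nat.stirlingSecond_eq_zero_of_lt n.lt_succ_self]
      simp [mul_comm]
    rw [pow_succ', ih, mul_sum, sum_range_succ' _ (n + 1)]
    simp only [mul_smul_comm, X_mul_descPochhammer, smul_add, smul_smul, sum_add_distrib, shift,
      Nat.stirlingSecond_succ_succ, Nat.stirlingSecond_succ_zero, zero_smul, add_zero, add_smul]
    exact add_comm _ _

theorem Polynomial.lhom_ext_descPochhammer {M : Type*} [AddCommGroup M] [Module R M]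
    {f g : R[X] →ₗ[R] M} (h : ∀ k, f (descPochhammer R k) = g (descPochhammer R k)) :
    f = g := by
  refine Polynomial.lhom_ext' fun n => LinearMap.ext fun a => ?_
  simp only [LinearMap.comp_apply, ← C_mul_X_pow_eq_monomial, ← smul_eq_C_mul, map_smul,
    X_pow_eq_sum_stirlingSecond_nsmul_descPochhammer, map_sum, map_nsmul, h]

variable (R) in
noncomputable def bellUmbra : R[X] →ₗ[R] R[X] :=
  Polynomial.lsum fun n => LinearMap.toSpanSingleton R R[X] ((bellPoly n).map (Int.castRingHom R))

theorem bellUmbra_X_pow (n : ℕ) :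
    bellUmbra R (X ^ n) = (bellPoly n).map (Int.castRingHom R) := by
  simp [bellUmbra, X_pow_eq_monomial]

theorem bellUmbra_one : bellUmbra R 1 = 1 := by
  simpa [bellPoly, stirling2] using bellUmbra_X_pow (R := R) 0

theorem bellUmbra_X_mul (f : R[X]) :
    bellUmbra R (X * f) = X * (derivative (bellUmbra R f) + bellUmbra R f) := by
  induction f using Polynomial.induction_on' with
  | add f g hf hg => rw [mul_add, map_add, hf, hg, map_add, derivative_add]; ring
  | monomial n a =>
    rw [← C_mul_X_pow_eq_monomial, ← smul_eq_C_mul, mul_smul_comm, ← pow_succ', map_smul,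
      map_smul, bellUmbra_X_pow, bellUmbra_X_pow, bellPoly_succ, derivative_smul]
    simp only [Polynomial.map_mul, Polynomial.map_add, Polynomial.map_X, derivative_map]
    rw [← smul_add, mul_smul_comm]

theorem bellUmbra_descPochhammer (k : ℕ) : bellUmbra R (descPochhammer R k) = X ^ k := by
  induction k with
  | zero => rw [descPochhammer_zero, bellUmbra_one, pow_zero]
  | succ k ih =>
    rw [descPochhammer_succ_right, mul_sub, mul_comm _ X, mul_comm _ (k : R[X]), ← nsmul_eq_mul,
      map_sub, map_nsmul, bellUmbra_X_mul, ih, derivative_X_pow, nsmul_eq_mul]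
    cases k
    · simp
    · simp only [Nat.cast_add, Nat.cast_one, map_add, map_natCast, map_one, add_tsub_cancel_right]
      ring

theorem bellUmbra_X_mul_eq_X_mul_comp (f : R[X]) :
    bellUmbra R (X * f) = X * bellUmbra R (f.comp (X + 1)) := by
  suffices (bellUmbra R).comp (LinearMap.mulLeft R X)
      = (LinearMap.mulLeft R X).comp ((bellUmbra R).comp (aeval (X + 1)).toLinearMap) from
    LinearMap.congr_fun this f
  refine Polynomial.lhom_ext_descPochhammer fun k => ?_
  simp only [LinearMap.comp_apply, LinearMap.mulLeft_apply, AlgHom.toLinearMap_apply,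
    ← comp_eq_aeval]
  cases k with
  | zero => simpa [bellUmbra_one] using bellUmbra_descPochhammer (R := R) 1
  | succ k =>
    rw [X_mul_descPochhammer, descPochhammer_succ_comp_X_add_one]
    simp only [map_add, map_nsmul, bellUmbra_descPochhammer]
    simp only [nsmul_eq_mul]
    ring

theorem bellUmbra_descPochhammer_mul (k : ℕ) (f : R[X]) :
    bellUmbra R (descPochhammer R k * f) = X ^ k * bellUmbra R (f.comp (X + C (k : R))) := by
  induction k generalizing f with
  | zero => simp
  | succ k ih =>
    have hshift : ((X : R[X]) + C (k : R)).comp (X + 1) = X + C ((k + 1 : ℕ) : R) := by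
      simp only [add_comp, X_comp, C_comp, Nat.cast_succ, C_add, C_1]
      ring
    rw [descPochhammer_succ_right, mul_assoc, ih, mul_comp, sub_comp, X_comp, natCast_comp,
      ← C_eq_natCast, add_sub_cancel_right, bellUmbra_X_mul_eq_X_mul_comp, comp_assoc, hshift,
      pow_succ, mul_assoc]

end CommRing

theorem neg_one_pow_mul_derPoly_comp_one_sub_succ (j : ℕ) :
    (-1) ^ (j + 1) * (derPoly (j + 1)).comp (1 - X)
      = X ^ (j + 1) - (j + 1 : ℤ[X]) * ((-1) ^ j * (derPoly j).comp (1 - X)) := by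
  rw [derPoly_succ, add_comp, mul_comp, pow_comp, sub_comp, X_comp, one_comp, add_comp,
    natCast_comp, one_comp, sub_sub_cancel_left, neg_pow (X : ℤ[X]), mul_add,
    ← mul_assoc _ ((-1) ^ (j + 1)), ← mul_pow, neg_one_mul, neg_neg, one_pow, one_mul,
    pow_succ (-1 : ℤ[X]) j]
  ring

section ZModPrime

variable {p : ℕ} [Fact p.Prime]

theorem descPochhammer_zmod_eq_X_pow_sub_X : descPochhammer (ZMod p) p = X ^ p - X := by
  have hp := (Fact.out : p.Prime).one_lt
  have hmonic : (X ^ p - X : (ZMod p)[X]).Monic :=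
    (monic_X_pow p).sub_of_left (by rw [degree_X_pow, degree_X]; exact_mod_cast hp)
  have hdeg : (X ^ p - X : (ZMod p)[X]).degree = p := by
    rw [degree_eq_natDegree hmonic.ne_zero, FiniteField.X_pow_card_sub_X_natDegree_eq _ hp]
  refine Polynomial.eq_of_degree_sub_lt_of_eval_finset_eq univ ?_ fun a _ => ?_
  · rw [card_univ, ZMod.card, ← hdeg]
    refine degree_sub_lt_right ?_ hmonic.ne_zero
      ((monic_descPochhammer _ p).leadingCoeff.trans hmonic.leadingCoeff.symm)
    rw [hdeg, degree_eq_natDegree (monic_descPochhammer _ p).ne_zero, descPochhammer_natDegree]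
  · rw [descPochhammer_eval_eq_prod_range, eval_sub, eval_pow, eval_X, ZMod.pow_card, sub_self]
    exact prod_eq_zero (mem_range.2 a.val_lt) (by rw [ZMod.natCast_zmod_val, sub_self])

noncomputable def fermatCofactor (p : ℕ) (a : ZMod p) : (ZMod p)[X] :=
  (X ^ p - X) /ₘ (X + C a)

theorem X_add_C_mul_fermatCofactor (a : ZMod p) :
    (X + C a) * fermatCofactor p a = X ^ p - X := by
  rw [fermatCofactor, ← sub_neg_eq_add, ← C_neg, mul_divByMonic_eq_iff_isRoot]
  simp [ZMod.pow_card]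

theorem eq_fermatCofactor {a : ZMod p} {f : (ZMod p)[X]} (h : (X + C a) * f = X ^ p - X) :
    f = fermatCofactor p a :=
  mul_left_cancel₀ (X_add_C_ne_zero a) (h.trans (X_add_C_mul_fermatCofactor a).symm)

theorem fermatCofactor_comp_X_add_C (a b : ZMod p) :
    (fermatCofactor p a).comp (X + C b) = fermatCofactor p (a + b) := by
  refine eq_fermatCofactor ?_
  have h := congrArg (·.comp (X + C b)) (X_add_C_mul_fermatCofactor a)
  simp only [mul_comp, add_comp, X_comp, C_comp, sub_comp, pow_comp, add_pow_char, ← C_pow,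
    ZMod.pow_card] at h
  rw [C_add, ← add_assoc, add_right_comm, h]
  ring

theorem fermatCofactor_eq_sum {a : ZMod p} (ha : a ≠ 0) :
    fermatCofactor p a = ∑ k ∈ Icc 1 (p - 1), C ((-a) ^ (p - 1 - k)) * X ^ k := by
  refine (eq_fermatCofactor ?_).symm
  set q := p - 1
  have hq : q + 1 = p := Nat.sub_add_cancel (Fact.out : p.Prime).pos
  have hsum : ∑ k ∈ Icc 1 q, C ((-a) ^ (q - k)) * X ^ k
      = X * ∑ i ∈ range q, X ^ i * C (-a) ^ (q - 1 - i) := by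
    rw [← Ico_add_one_right_eq_Icc, sum_Ico_eq_sum_range, Nat.add_sub_cancel, mul_sum]
    refine sum_congr rfl fun i _ => ?_
    rw [map_pow, show q - (1 + i) = q - 1 - i by omega, add_comm 1 i, pow_succ]
    ring
  have hunit : C (-a) ^ q = 1 := by
    rw [← map_pow, ZMod.pow_card_sub_one_eq_one (neg_ne_zero.2 ha), map_one]
  calc (X + C a) * ∑ k ∈ Icc 1 q, C ((-a) ^ (q - k)) * X ^ k
      = X * ((∑ i ∈ range q, X ^ i * C (-a) ^ (q - 1 - i)) * (X - C (-a))) := by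
        rw [hsum, C_neg, sub_neg_eq_add]; ring
    _ = X ^ p - X := by rw [geom_sum₂_mul, hunit, mul_sub, mul_one, ← pow_succ', hq]

theorem bellUmbra_X_pow_sub_X : bellUmbra (ZMod p) (X ^ p - X) = X ^ p := by
  rw [← descPochhammer_zmod_eq_X_pow_sub_X, bellUmbra_descPochhammer]

theorem X_mul_bellUmbra_fermatCofactor_succ (j : ℕ) :
    X * bellUmbra (ZMod p) (fermatCofactor p (j + 1))
      = X ^ p - (j : ZMod p) • bellUmbra (ZMod p) (fermatCofactor p j) := by
  have h := congrArg (bellUmbra (ZMod p)) (X_add_C_mul_fermatCofactor (p := p) j)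
  rw [add_mul, map_add, bellUmbra_X_mul_eq_X_mul_comp, ← C_1, fermatCofactor_comp_X_add_C,
    ← smul_eq_C_mul, map_smul, bellUmbra_X_pow_sub_X] at h
  exact eq_sub_of_add_eq h

theorem X_pow_succ_mul_bellUmbra_fermatCofactor_succ (j : ℕ) :
    X ^ (j + 1) * bellUmbra (ZMod p) (fermatCofactor p (j + 1))
      = X ^ p * ((-1) ^ j * (derPoly j).comp (1 - X)).map (Int.castRingHom (ZMod p)) := by
  induction j with
  | zero => simpa [derPoly] using X_mul_bellUmbra_fermatCofactor_succ (p := p) 0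
  | succ j ih =>
    have h := X_mul_bellUmbra_fermatCofactor_succ (p := p) (j + 1)
    rw [neg_one_pow_mul_derPoly_comp_one_sub_succ, pow_succ, mul_assoc, h, smul_eq_C_mul,
      mul_sub, mul_left_comm, Nat.cast_succ, ih]
    simp only [Polynomial.map_sub, Polynomial.map_mul, Polynomial.map_pow, Polynomial.map_X,
      Polynomial.map_add, Polynomial.map_natCast, Polynomial.map_one, Polynomial.map_neg, C_add,
      C_1, map_natCast]
    ring

theorem sum_bellPoly_eq_sum_derPoly_zmod (n j : ℕ)
    (hj : ((j + 1 : ℕ) : ZMod p) ≠ 0) :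
    X ^ (j + 1) * ∑ k ∈ Icc 1 (p - 1), (-((j + 1 : ℕ) : (ZMod p)[X])) ^ (p - 1 - k) *
        (bellPoly (n + k)).map (Int.castRingHom (ZMod p))
      = X ^ p * ∑ k ∈ range (n + 1), (Nat.stirlingSecond n k : (ZMod p)[X]) * (-1) ^ (j + k) *
          ((derPoly (j + k)).comp (1 - X)).map (Int.castRingHom (ZMod p)) := by
  have hG : ∑ k ∈ Icc 1 (p - 1), (-((j + 1 : ℕ) : (ZMod p)[X])) ^ (p - 1 - k) *
        (bellPoly (n + k)).map (Int.castRingHom (ZMod p))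
      = bellUmbra (ZMod p) (X ^ n * fermatCofactor p (j + 1 : ℕ)) := by
    rw [fermatCofactor_eq_sum hj, mul_sum, map_sum]
    refine sum_congr rfl fun k _ => ?_
    rw [mul_left_comm, ← pow_add, ← smul_eq_C_mul, map_smul, bellUmbra_X_pow, smul_eq_C_mul,
      map_pow, map_neg, map_natCast]
  rw [hG, X_pow_eq_sum_stirlingSecond_nsmul_descPochhammer (R := ZMod p) n, sum_mul, map_sum,
    mul_sum, mul_sum]
  refine sum_congr rfl fun k _ => ?_
  have h := X_pow_succ_mul_bellUmbra_fermatCofactor_succ (p := p) (j + k)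
  rw [Polynomial.map_mul, Polynomial.map_pow, Polynomial.map_neg, Polynomial.map_one] at h
  rw [smul_mul_assoc, map_nsmul, mul_smul_comm, bellUmbra_descPochhammer_mul,
    fermatCofactor_comp_X_add_C, ← mul_assoc, ← pow_add, nsmul_eq_mul,
    show j + 1 + k = j + k + 1 by ring, show ((j + 1 : ℕ) : ZMod p) + k = (j + k : ℕ) + 1 by
      push_cast; ring, h]
  ring

end ZModPrime

theorem sun_zagier_poly (n m p : ℕ) (hm : 1 ≤ m) (hp : p.Prime) (hpm : ¬ p ∣ m) :
    ∀ i, (p : ℤ) ∣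
      (X ^ m * ∑ k ∈ Icc 1 (p - 1), C ((-(m : ℤ)) ^ (p - 1 - k)) * bellPoly (n + k) -
        X ^ p * ∑ k ∈ range (n + 1),
          C ((stirling2 n k : ℤ) * (-1) ^ (m + k - 1)) * (derPoly (m + k - 1)).comp (1 - X)).coeff i := by
  have : Fact p.Prime := ⟨hp⟩
  obtain ⟨j, rfl⟩ : ∃ j, m = j + 1 := ⟨m - 1, by omega⟩
  intro i
  rw [← ZMod.intCast_zmod_eq_zero_iff_dvd, ← eq_intCast (Int.castRingHom (ZMod p)),
    ← coeff_map]
  simp only [Polynomial.map_sub, Polynomial.map_mul, Polynomial.map_sum, Polynomial.map_pow,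
    Polynomial.map_X, Polynomial.map_neg, Polynomial.map_natCast, Polynomial.map_one, eq_intCast,
    Int.cast_mul, Int.cast_pow, Int.cast_neg, Int.cast_natCast, Int.cast_one,
    stirling2_eq_stirlingSecond, add_right_comm j 1, Nat.add_sub_cancel]
  rw [sum_bellPoly_eq_sum_derPoly_zmod n j ((ZMod.natCast_eq_zero_iff _ _).not.2 hpm), sub_self,
    coeff_zero]
end

section
/- For any integer n ≥ 0 and any prime p, Σ_{k=1}^{p-1} (−1)^k B_{n+k} ≡ V_n (mod p), where V_n = Σ_{k=0}^{n} (−1)^{n−k} C(n,k) B_k. -/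
open Polynomial Finset

/-!
Let `L` be the linear functional on polynomials with `L (X ^ n) = B_n`. The recurrence
`B_{n+1} = ∑ C(n,k) B_k` says `L (X * g) = L (g (X + 1))`; iterating, the falling factorial
`X (X - 1) ⋯ (X - m + 1)` acts as the shift by `m`. Modulo `p` the falling factorial of length `p`
is `X ^ p - X` and the shift by `p` is trivial, which gives Touchard's congruence
`L (X ^ p * g) ≡ L (X * g) + L g`. Since `∑_{k<p} (-X)^k ≡ (X + 1)^(p-1)` mod `p`,
`∑_{k<p} (-1)^k B_{n+k} = L (X^n (X+1)^(p-1)) = L (X^p (X-1)^n) ≡ L (X (X-1)^n) + L ((X-1)^n) = B_n + V_n`.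
-/

theorem stirling2_eq_zero_of_lt : ∀ {n k : ℕ}, n < k → stirling2 n k = 0
  | _, 0, h => absurd h (Nat.not_lt_zero _)
  | 0, _ + 1, _ => rfl
  | n + 1, k + 1, h => by
    rw [stirling2, stirling2_eq_zero_of_lt (by omega), stirling2_eq_zero_of_lt (by omega), mul_zero]

theorem sum_range_stirling2 {n m : ℕ} (h : n < m) : ∑ j ∈ range m, stirling2 n j = bell n :=
  (sum_subset (by simpa using h) fun _ _ hj => stirling2_eq_zero_of_lt (by simpa using hj)).symm

theorem stirling2_succ_succ_eq_sum_choose (n : ℕ) :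
    ∀ j, stirling2 (n + 1) (j + 1) = ∑ k ∈ range (n + 1), n.choose k * stirling2 k j := by
  induction n with
  | zero => intro j; cases j <;> rfl
  | succ n ih =>
    intro j
    have pascal := sum_choose_succ_mul (R := ℕ) (fun k _ => stirling2 k j) n
    simp only [Nat.cast_id] at pascal
    rw [pascal, ← ih]
    cases j with
    | zero => simp [stirling2]
    | succ j =>
      simp only [stirling2, mul_add, sum_add_distrib, mul_left_comm _ (j + 1), ← mul_sum, ← ih]
      ring

theorem bell_succ_eq_sum_choose (n : ℕ) :
    bell (n + 1) = ∑ k ∈ range (n + 1), n.choose k * bell k := by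
  rw [bell, sum_range_succ', stirling2, add_zero]
  simp_rw [stirling2_succ_succ_eq_sum_choose]
  rw [sum_comm]
  refine sum_congr rfl fun k hk => ?_
  rw [← mul_sum, sum_range_stirling2 (by simpa using hk)]

section BellFunctional

variable (R : Type*) [CommSemiring R]

noncomputable def bellFunctional : R[X] →ₗ[R] R :=
  lsum fun n => LinearMap.mulRight R (bell n : R)

variable {R}

theorem bellFunctional_monomial (n : ℕ) (a : R) :
    bellFunctional R (monomial n a) = a * bell n := by
  simp [bellFunctional]

theorem bellFunctional_X_pow (n : ℕ) : bellFunctional R (X ^ n) = bell n := by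
  rw [← monomial_one_right_eq_X_pow, bellFunctional_monomial, one_mul]

theorem bellFunctional_X_pow_mul_C (n : ℕ) (a : R) :
    bellFunctional R (X ^ n * C a) = a * bell n := by
  rw [X_pow_mul_C, C_mul_X_pow_eq_monomial, bellFunctional_monomial]

theorem bellFunctional_X_mul (g : R[X]) :
    bellFunctional R (X * g) = bellFunctional R (g.comp (X + 1)) := by
  induction g using Polynomial.induction_on' with
  | add f g hf hg => rw [mul_add, map_add, hf, hg, add_comp, map_add]
  | monomial n a =>
    rw [X_mul_monomial, bellFunctional_monomial, bell_succ_eq_sum_choose, ← C_mul_X_pow_eq_monomial,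
      mul_comp, C_comp, X_pow_comp, add_pow, C_mul', map_smul, map_sum]
    push_cast
    rw [mul_sum, smul_eq_mul, mul_sum]
    refine sum_congr rfl fun k _ => ?_
    rw [one_pow, mul_one, ← C_eq_natCast, bellFunctional_X_pow_mul_C]

end BellFunctional

section BellFunctionalRing

variable {R : Type*} [CommRing R]

theorem bellFunctional_descPochhammer_mul (m : ℕ) (g : R[X]) :
    bellFunctional R (descPochhammer R m * g) = bellFunctional R (g.comp (X + (m : R[X]))) := by
  induction m generalizing g with
  | zero => simp
  | succ m ih =>
    rw [descPochhammer_succ_left, mul_assoc, bellFunctional_X_mul, mul_comp, comp_assoc]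
    simp only [sub_comp, add_comp, X_comp, one_comp, add_sub_cancel_right, comp_X, ih, comp_assoc]
    push_cast
    ring_nf

theorem bellFunctional_X_sub_one_pow (n : ℕ) :
    bellFunctional R ((X - 1) ^ n) = ∑ k ∈ range (n + 1), (-1 : R) ^ (n - k) * n.choose k * bell k := by
  rw [sub_eq_add_neg, add_pow, map_sum]
  refine sum_congr rfl fun k _ => ?_
  rw [← bellFunctional_X_pow_mul_C]
  congr 1
  simp [mul_assoc]

theorem bellFunctional_X_pow_mul_geom_sum_neg_X (n m : ℕ) :
    bellFunctional R (X ^ n * ∑ k ∈ range m, (-X) ^ k) = ∑ k ∈ range m, (-1 : R) ^ k * bell (n + k) := by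
  rw [mul_sum, map_sum]
  refine sum_congr rfl fun k _ => ?_
  rw [← bellFunctional_X_pow_mul_C]
  congr 1
  rw [neg_pow, pow_add, map_pow, map_neg, map_one]
  ring

end BellFunctionalRing

section CharP

variable {p : ℕ} [Fact p.Prime]

theorem bellFunctional_X_pow_char_mul (g : (ZMod p)[X]) :
    bellFunctional (ZMod p) (X ^ p * g) = bellFunctional (ZMod p) (X * g) + bellFunctional (ZMod p) g := by
  have h := bellFunctional_descPochhammer_mul p g
  rw [descPochhammer_zmod_eq_X_pow_sub_X, CharP.cast_eq_zero, add_zero, comp_X, sub_mul, map_sub] at h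
  exact sub_eq_iff_eq_add'.mp h

theorem geom_sum_neg_X_eq_X_add_one_pow : ∑ k ∈ range p, (-X : (ZMod p)[X]) ^ k = (X + 1) ^ (p - 1) := by
  have hp := (Fact.out : p.Prime).one_lt
  refine mul_left_cancel₀ (X_add_C_ne_zero (1 : ZMod p)) ?_
  calc (X + C 1) * ∑ k ∈ range p, (-X : (ZMod p)[X]) ^ k = (1 - -X) * ∑ k ∈ range p, (-X) ^ k := by
        rw [C_1, sub_neg_eq_add, add_comm]
    _ = 1 - (-X) ^ p := by rw [mul_neg_geom_sum]
    _ = (X + 1) ^ p := by rw [neg_pow, neg_one_pow_char, add_pow_char, one_pow]; ring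
    _ = (X + C 1) * (X + 1) ^ (p - 1) := by rw [C_1, ← pow_succ', Nat.sub_add_cancel hp.le]

end CharP

theorem sum_range_neg_one_pow_mul_bell_add {p : ℕ} [Fact p.Prime] (n : ℕ) :
    ∑ k ∈ range p, (-1 : ZMod p) ^ k * bell (n + k) = bell n + bellFunctional (ZMod p) ((X - 1) ^ n) := by
  have hp := (Fact.out : p.Prime).one_lt
  rw [← bellFunctional_X_pow_mul_geom_sum_neg_X, geom_sum_neg_X_eq_X_add_one_pow]
  have hshift : ((X - 1) ^ n : (ZMod p)[X]).comp (X + 1) = X ^ n := by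
    rw [pow_comp, sub_comp, X_comp, one_comp, add_sub_cancel_right]
  calc bellFunctional (ZMod p) (X ^ n * (X + 1) ^ (p - 1))
      = bellFunctional (ZMod p) ((X ^ (p - 1) * (X - 1 : (ZMod p)[X]) ^ n).comp (X + 1)) := by
        rw [mul_comp, hshift, X_pow_comp, mul_comm]
    _ = bellFunctional (ZMod p) (X ^ p * (X - 1) ^ n) := by
        rw [← bellFunctional_X_mul, ← mul_assoc, ← pow_succ', Nat.sub_add_cancel hp.le]
    _ = bellFunctional (ZMod p) (X * (X - 1) ^ n) + bellFunctional (ZMod p) ((X - 1) ^ n) :=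
        bellFunctional_X_pow_char_mul _
    _ = bell n + bellFunctional (ZMod p) ((X - 1) ^ n) := by
        rw [bellFunctional_X_mul, hshift, bellFunctional_X_pow]

theorem alternating_bell_sum (n p : ℕ) (hp : p.Prime) :
    (∑ k ∈ Icc 1 (p - 1), (-1 : ℤ) ^ k * bell (n + k)) ≡
      (∑ k ∈ range (n + 1), (-1 : ℤ) ^ (n - k) * n.choose k * bell k) [ZMOD p] := by
  have := Fact.mk hp
  rw [← ZMod.intCast_eq_intCast_iff]
  push_cast
  rw [← bellFunctional_X_sub_one_pow, ← add_right_inj (bell n : ZMod p),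
    ← sum_range_neg_one_pow_mul_bell_add, range_eq_Ico, sum_eq_sum_Ico_succ_bot hp.pos,
    ← Ico_add_one_right_eq_Icc, Nat.sub_add_cancel hp.one_lt.le]
  simp
end
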